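/- Let μ₀ > 0, c, r, d, τ, θ ∈ ℝ, a > 0, b > 0, and let s ∈ ℝ be such that s − r − d·e^{−τs} > 0. Set κ := (s − r − d·e^{−τs}) / (μ₀²·(1 + c²·e^{−τs})) (note 1 + c²e^{−τs} > 0 for real s) and μ̂ := √κ. Let (g_k)_{k≥0} be a sequence of real numbers and suppose that for every k ≥ 1 there exist functions e₁ᵏ, φ₁ᵏ (twice continuously differentiable on [−a, 0], satisfying μ₀²·(1 + c²e^{−τs})·f'' = (s − r − de^{−τs})·f on [−a, 0] and f(−a) = 0) and e₂ᵏ, φ₂ᵏ (twice continuously differentiable on [0, b], satisfying the same ODE on [0, b] and f(b) = 0) such that e₁ᵏ(0) = g_{k−1}, e₂ᵏ(0) = g_{k−1}, (φ₁ᵏ)'(0) = (e₁ᵏ)'(0) − (e₂ᵏ)'(0), (φ₂ᵏ)'(0) = (e₂ᵏ)'(0) − (e₁ᵏ)'(0), and g_k = g_{k−1} − θ·(φ₁ᵏ(0) + φ₂ᵏ(0)). Then g_k = (1 − θ·(2 + coth(μ̂a)/coth(μ̂b) + coth(μ̂b)/coth(μ̂a)))ᵏ·g_0 for all k ≥ 0.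 In particular, for equal subdomains a = b one has g_k = (1 − 4θ)ᵏ·g_0; hence if θ = 1/4 then g_k = 0 for all k ≥ 1, and if 0 < θ < 1/2 then |g_k| ≤ |1 − 4θ|ᵏ·|g_0| and g_k → 0 as k → ∞. -/

import Mathlib

/-!
For real `s` the Laplace-transformed errors solve `f'' = μ² f` on each subdomain and vanish at the
outer boundary, so each is a multiple of `sinh (μ · dist(x, outer boundary))`. Comparing with that
solution through the constant Wronskian gives the Dirichlet-to-Neumann map at the interface:
`f'(0) = ± μ coth(μ ℓ) f(0)` on a subdomain of length `ℓ`. Feeding this through the Dirichlet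
and Neumann solves shows that one NNWR sweep multiplies the interface value by
`1 - θ (2 + coth(μa)/coth(μb) + coth(μb)/coth(μa))`, which equals `1 - 4θ` when `a = b`.
-/

open Set Filter

/-- The hyperbolic cotangent. -/
noncomputable def coth (x : ℝ) : ℝ := Real.cosh x / Real.sinh x

lemma coth_ne_zero {x : ℝ} (hx : x ≠ 0) : coth x ≠ 0 :=
  div_ne_zero (Real.cosh_pos x).ne' (Real.sinh_ne_zero.2 hx)

def SolvesModifiedHelmholtzOn (m : ℝ) (S : Set ℝ) (f : ℝ → ℝ) : Prop :=
  ContDiffOn ℝ 2 f S ∧ ∀ x ∈ S, derivWithin (derivWithin f S) S x = m ^ 2 * f x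

lemma solvesModifiedHelmholtzOn_of_mul_eq_mul {A B m : ℝ} (hA : A ≠ 0) (hm : m ^ 2 = B / A)
    {S : Set ℝ} {f : ℝ → ℝ} (hf : ContDiffOn ℝ 2 f S)
    (hode : ∀ x ∈ S, A * derivWithin (derivWithin f S) S x = B * f x) :
    SolvesModifiedHelmholtzOn m S f := by
  refine ⟨hf, fun x hx => ?_⟩
  rw [hm, div_mul_eq_mul_div, eq_div_iff hA]
  linear_combination hode x hx

namespace SolvesModifiedHelmholtzOn

variable {m l u : ℝ} {f : ℝ → ℝ}

lemma wronskian_eq (hf : SolvesModifiedHelmholtzOn m (Icc l u) f) (hlu : l < u)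
    {G G' : ℝ → ℝ} (hG : ∀ x, HasDerivAt G (G' x) x)
    (hG' : ∀ x, HasDerivAt G' (m ^ 2 * G x) x) :
    ∀ x ∈ Icc l u, derivWithin f (Icc l u) x * G x - f x * G' x
      = derivWithin f (Icc l u) l * G l - f l * G' l := by
  obtain ⟨hf, hode⟩ := hf
  have hf' : ContDiffOn ℝ 1 (derivWithin f (Icc l u)) (Icc l u) :=
    hf.derivWithin (uniqueDiffOn_Icc hlu) le_rfl
  have hGc : Continuous G := continuous_iff_continuousAt.2 fun x => (hG x).continuousAt
  have hG'c : Continuous G' := continuous_iff_continuousAt.2 fun x => (hG' x).continuousAt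
  refine constant_of_has_deriv_right_zero
    ((hf'.continuousOn.mul hGc.continuousOn).sub (hf.continuousOn.mul hG'c.continuousOn))
    fun x hx => ?_
  have hxI : x ∈ Icc l u := Ico_subset_Icc_self hx
  have hfx : HasDerivWithinAt f (derivWithin f (Icc l u) x) (Icc l u) x :=
    ((hf.differentiableOn two_ne_zero) x hxI).hasDerivWithinAt
  have hf'x : HasDerivWithinAt (derivWithin f (Icc l u)) (m ^ 2 * f x) (Icc l u) x := by
    rw [← hode x hxI]
    exact ((hf'.differentiableOn one_ne_zero) x hxI).hasDerivWithinAt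
  refine (((hf'x.mul (hG x).hasDerivWithinAt).sub (hfx.mul (hG' x).hasDerivWithinAt)).congr_deriv
    (by ring)).mono_of_mem_nhdsWithin (Icc_mem_nhdsGE_of_mem hx)

/-- The Dirichlet-to-Neumann map of a subdomain. -/
lemma derivWithin_right_eq (hf : SolvesModifiedHelmholtzOn m (Icc l u) f) (hlu : l < u)
    (hm : m ≠ 0) (hl : f l = 0) :
    derivWithin f (Icc l u) u = m * coth (m * (u - l)) * f u := by
  have hG : ∀ x, HasDerivAt (fun y => Real.sinh (m * (y - l))) (m * Real.cosh (m * (x - l))) x :=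
    fun x => ((((hasDerivAt_id' x).sub_const l).const_mul m).sinh).congr_deriv (by ring)
  have hG' : ∀ x, HasDerivAt (fun y => m * Real.cosh (m * (y - l)))
      (m ^ 2 * Real.sinh (m * (x - l))) x := fun x =>
    (((((hasDerivAt_id' x).sub_const l).const_mul m).cosh).const_mul m).congr_deriv (by ring)
  have hW := hf.wronskian_eq hlu hG hG' u (right_mem_Icc.2 hlu.le)
  simp only [sub_self, mul_zero, Real.sinh_zero, hl, zero_mul] at hW
  have hsinh : Real.sinh (m * (u - l)) ≠ 0 :=
    Real.sinh_ne_zero.2 (mul_ne_zero hm (sub_pos.2 hlu).ne')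
  rw [coth, mul_div_assoc', div_mul_eq_mul_div, eq_div_iff hsinh]
  linear_combination hW

lemma derivWithin_left_eq (hf : SolvesModifiedHelmholtzOn m (Icc l u) f) (hlu : l < u)
    (hm : m ≠ 0) (hu : f u = 0) :
    derivWithin f (Icc l u) l = -(m * coth (m * (u - l)) * f l) := by
  have hG : ∀ x, HasDerivAt (fun y => Real.sinh (m * (u - y)))
      (-(m * Real.cosh (m * (u - x)))) x := fun x =>
    ((((hasDerivAt_id' x).const_sub u).const_mul m).sinh).congr_deriv (by ring)
  have hG' : ∀ x, HasDerivAt (fun y => -(m * Real.cosh (m * (u - y))))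
      (m ^ 2 * Real.sinh (m * (u - x))) x := fun x =>
    ((((((hasDerivAt_id' x).const_sub u).const_mul m).cosh).const_mul m).neg).congr_deriv
      (by ring)
  have hW := hf.wronskian_eq hlu hG hG' u (right_mem_Icc.2 hlu.le)
  simp only [sub_self, mul_zero, Real.sinh_zero, hu, zero_mul] at hW
  have hsinh : Real.sinh (m * (u - l)) ≠ 0 :=
    Real.sinh_ne_zero.2 (mul_ne_zero hm (sub_pos.2 hlu).ne')
  rw [coth, mul_div_assoc', div_mul_eq_mul_div, neg_div', eq_div_iff hsinh]
  linear_combination -hW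

end SolvesModifiedHelmholtzOn

lemma nnwr_interface_sum_eq {m a b g : ℝ} (hm : m ≠ 0) (ha : 0 < a) (hb : 0 < b)
    {e₁ φ₁ e₂ φ₂ : ℝ → ℝ}
    (he₁ : SolvesModifiedHelmholtzOn m (Icc (-a) 0) e₁) (he₁a : e₁ (-a) = 0)
    (hφ₁ : SolvesModifiedHelmholtzOn m (Icc (-a) 0) φ₁) (hφ₁a : φ₁ (-a) = 0)
    (he₂ : SolvesModifiedHelmholtzOn m (Icc 0 b) e₂) (he₂b : e₂ b = 0)
    (hφ₂ : SolvesModifiedHelmholtzOn m (Icc 0 b) φ₂) (hφ₂b : φ₂ b = 0)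
    (he₁0 : e₁ 0 = g) (he₂0 : e₂ 0 = g)
    (hφ₁' : derivWithin φ₁ (Icc (-a) 0) 0
      = derivWithin e₁ (Icc (-a) 0) 0 - derivWithin e₂ (Icc 0 b) 0)
    (hφ₂' : derivWithin φ₂ (Icc 0 b) 0
      = derivWithin e₂ (Icc 0 b) 0 - derivWithin e₁ (Icc (-a) 0) 0) :
    φ₁ 0 + φ₂ 0 = (2 + coth (m * a) / coth (m * b) + coth (m * b) / coth (m * a)) * g := by
  have hca := coth_ne_zero (mul_ne_zero hm ha.ne')
  have hcb := coth_ne_zero (mul_ne_zero hm hb.ne')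
  have ha0 : -a < 0 := neg_lt_zero.2 ha
  have De₁ := he₁.derivWithin_right_eq ha0 hm he₁a
  have Dφ₁ := hφ₁.derivWithin_right_eq ha0 hm hφ₁a
  have De₂ := he₂.derivWithin_left_eq hb hm he₂b
  have Dφ₂ := hφ₂.derivWithin_left_eq hb hm hφ₂b
  simp only [sub_zero, sub_neg_eq_add, zero_add] at De₁ Dφ₁ De₂ Dφ₂
  have hφ₁0 : coth (m * a) * φ₁ 0 = (coth (m * a) + coth (m * b)) * g := by
    apply mul_left_cancel₀ hm
    linear_combination
      -Dφ₁ + hφ₁' + De₁ - De₂ + m * coth (m * a) * he₁0 + m * coth (m * b) * he₂0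
  have hφ₂0 : coth (m * b) * φ₂ 0 = (coth (m * a) + coth (m * b)) * g := by
    apply mul_left_cancel₀ hm
    linear_combination
      Dφ₂ - hφ₂' + De₁ - De₂ + m * coth (m * a) * he₁0 + m * coth (m * b) * he₂0
  field_simp
  linear_combination coth (m * b) * hφ₁0 + coth (m * a) * hφ₂0

lemma eq_pow_mul_of_succ_eq_mul {M : Type*} [Monoid M] {g : ℕ → M} {ρ : M}
    (h : ∀ k, g (k + 1) = ρ * g k) (k : ℕ) : g k = ρ ^ k * g 0 := by
  induction k with
  | zero => simp
  | succ k ih => rw [h, ih, pow_succ', mul_assoc]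

theorem nnwr_neutral_pde_convergence
    (μ₀ c r d τ θ a b s : ℝ) (hμ₀ : 0 < μ₀) (ha : 0 < a) (hb : 0 < b)
    (hσ : 0 < s - r - d * Real.exp (-τ * s))
    (μ : ℝ)
    (hμ : μ = Real.sqrt ((s - r - d * Real.exp (-τ * s))
      / (μ₀ ^ 2 * (1 + c ^ 2 * Real.exp (-τ * s)))))
    (g : ℕ → ℝ)
    (hiter : ∀ k : ℕ, ∃ e₁ φ₁ e₂ φ₂ : ℝ → ℝ,
      ContDiffOn ℝ 2 e₁ (Icc (-a) 0) ∧
      (∀ x ∈ Icc (-a) 0,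
        μ₀ ^ 2 * (1 + c ^ 2 * Real.exp (-τ * s))
            * derivWithin (derivWithin e₁ (Icc (-a) 0)) (Icc (-a) 0) x
          = (s - r - d * Real.exp (-τ * s)) * e₁ x) ∧
      e₁ (-a) = 0 ∧
      ContDiffOn ℝ 2 φ₁ (Icc (-a) 0) ∧
      (∀ x ∈ Icc (-a) 0,
        μ₀ ^ 2 * (1 + c ^ 2 * Real.exp (-τ * s))
            * derivWithin (derivWithin φ₁ (Icc (-a) 0)) (Icc (-a) 0) x
          = (s - r - d * Real.exp (-τ * s)) * φ₁ x) ∧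
      φ₁ (-a) = 0 ∧
      ContDiffOn ℝ 2 e₂ (Icc 0 b) ∧
      (∀ x ∈ Icc 0 b,
        μ₀ ^ 2 * (1 + c ^ 2 * Real.exp (-τ * s))
            * derivWithin (derivWithin e₂ (Icc 0 b)) (Icc 0 b) x
          = (s - r - d * Real.exp (-τ * s)) * e₂ x) ∧
      e₂ b = 0 ∧
      ContDiffOn ℝ 2 φ₂ (Icc 0 b) ∧
      (∀ x ∈ Icc 0 b,
        μ₀ ^ 2 * (1 + c ^ 2 * Real.exp (-τ * s))
            * derivWithin (derivWithin φ₂ (Icc 0 b)) (Icc 0 b) x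
          = (s - r - d * Real.exp (-τ * s)) * φ₂ x) ∧
      φ₂ b = 0 ∧
      e₁ 0 = g k ∧ e₂ 0 = g k ∧
      derivWithin φ₁ (Icc (-a) 0) 0
        = derivWithin e₁ (Icc (-a) 0) 0 - derivWithin e₂ (Icc 0 b) 0 ∧
      derivWithin φ₂ (Icc 0 b) 0
        = derivWithin e₂ (Icc 0 b) 0 - derivWithin e₁ (Icc (-a) 0) 0 ∧
      g (k + 1) = g k - θ * (φ₁ 0 + φ₂ 0)) :
    (∀ k : ℕ, g k
        = (1 - θ * (2 + coth (μ * a) / coth (μ * b)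
            + coth (μ * b) / coth (μ * a))) ^ k * g 0) ∧
    (a = b →
      (∀ k : ℕ, g k = (1 - 4 * θ) ^ k * g 0) ∧
      (θ = 1 / 4 → ∀ k : ℕ, 1 ≤ k → g k = 0) ∧
      (0 < θ → θ < 1 / 2 →
        (∀ k : ℕ, |g k| ≤ |1 - 4 * θ| ^ k * |g 0|) ∧
        Tendsto g atTop (nhds 0))) := by
  have hA : 0 < μ₀ ^ 2 * (1 + c ^ 2 * Real.exp (-τ * s)) := by positivity
  have hκ := div_pos hσ hA
  have hμ0 : μ ≠ 0 := by rw [hμ]; exact (Real.sqrt_pos.2 hκ).ne'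
  have hμ2 := hμ ▸ Real.sq_sqrt hκ.le
  have hsol := @solvesModifiedHelmholtzOn_of_mul_eq_mul _ _ _ hA.ne' hμ2
  have hstep : ∀ k, g (k + 1)
      = (1 - θ * (2 + coth (μ * a) / coth (μ * b) + coth (μ * b) / coth (μ * a))) * g k := by
    intro k
    obtain ⟨e₁, φ₁, e₂, φ₂, he₁c, he₁, he₁a, hφ₁c, hφ₁, hφ₁a, he₂c, he₂, he₂b, hφ₂c, hφ₂,
      hφ₂b, he₁0, he₂0, hφ₁', hφ₂', hgk⟩ := hiter k
    rw [hgk, nnwr_interface_sum_eq hμ0 ha hb (hsol he₁c he₁) he₁a (hsol hφ₁c hφ₁) hφ₁a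
      (hsol he₂c he₂) he₂b (hsol hφ₂c hφ₂) hφ₂b he₁0 he₂0 hφ₁' hφ₂']
    ring
  have hgeom := eq_pow_mul_of_succ_eq_mul hstep
  refine ⟨hgeom, fun hab => ?_⟩
  subst hab
  have hgeom4 : ∀ k, g k = (1 - 4 * θ) ^ k * g 0 := fun k => by
    rw [hgeom k, div_self (coth_ne_zero (mul_ne_zero hμ0 ha.ne'))]; ring
  refine ⟨hgeom4, fun hθ k hk => by rw [hgeom4, hθ]; simp [zero_pow (by omega : k ≠ 0)],
    fun hθ0 hθ1 => ⟨fun k => by rw [hgeom4, abs_mul, abs_pow], ?_⟩⟩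
  have hρ : |1 - 4 * θ| < 1 := abs_lt.2 ⟨by linarith, by linarith⟩
  simpa [← hgeom4] using (tendsto_pow_atTop_nhds_zero_of_abs_lt_one hρ).mul_const (g 0)
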